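/- arXiv:2112.06834 — 6 statements merged into one kernel-verified Lean document; each statement's English description precedes it below -/
import Mathlib

section
/- Let {X_ℓ, f_ℓ} be an inverse sequence of compact metric spaces with surjective continuous bonding functions, let g : varprojlim{X_ℓ, f_ℓ} → varprojlim{X_ℓ, f_ℓ} be a continuous function, and let (n₀, m₀) ∈ W be such that f_{n₀,m₀}(x) ∉ T_{n₀,m₀}(g)(x) for each x ∈ X_{m₀}. Then for all (n, m) ∈ W with n ≥ n₀ and m ≥ m₀, it holds that f_{n,m}(x) ∉ T_{n,m}(g)(x) for each x ∈ X_m. -/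
/-!
Coordinates of a point of the inverse limit are related by the bonding maps, so a point `z`
witnessing `f_{n,m}(x) ∈ T_{n,m}(g)(x)` also witnesses `f_{n₀,m₀}(x') ∈ T_{n₀,m₀}(g)(x')` for
`x' = f_{m₀,m}(x)`: both sides of the membership are simply pushed down by the bonding maps.
-/

open Metric Filter Set Function

/-- The inverse limit of an inverse sequence `{X n, f n}` of spaces with
single-valued bonding maps `f n : X (n+1) → X n`. -/
def invLim (X : ℕ → Type*) (f : ∀ n, X (n + 1) → X n) : Set (∀ n, X n) :=
  {x | ∀ n, x n = f n (x (n + 1))}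

/-- The composite bonding map `f_{n,m} : X m → X n` for `n ≤ m`. -/
def bondMap {X : ℕ → Type*} (f : ∀ n, X (n + 1) → X n) {n m : ℕ} (h : n ≤ m) :
    X m → X n :=
  Nat.leRecOn (C := fun k => X k → X n) h (fun {k} g => g ∘ f k) id

/-- A set-valued function is upper semicontinuous (with nonempty closed values):
all of its values are nonempty closed sets and its graph is closed. -/
def IsUSC {A B : Type*} [TopologicalSpace A] [TopologicalSpace B] (F : A → Set B) : Prop :=
  (∀ a, (F a).Nonempty) ∧ (∀ a, IsClosed (F a)) ∧ IsClosed {p : A × B | p.2 ∈ F p.1}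

/-- The `T_{n,m}` transformation of a map between inverse limits:
`T_{n,m}(g)(x) = q_n (g (p_m ⁻¹ x))`. -/
def Ttrans {X Y : ℕ → Type*} {f : ∀ n, X (n + 1) → X n} {gs : ∀ n, Y (n + 1) → Y n}
    (g : ↥(invLim X f) → ↥(invLim Y gs)) (n m : ℕ) (x : X m) : Set (Y n) :=
  {y | ∃ z : ↥(invLim X f), z.1 m = x ∧ (g z).1 n = y}

/-- A space has the fixed point property if every continuous self-map has a fixed point. -/
def HasFPP (Z : Type*) [TopologicalSpace Z] : Prop :=
  ∀ g : Z → Z, Continuous g → ∃ p, g p = p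

section BondMap

variable {X : ℕ → Type*} (f : ∀ n, X (n + 1) → X n)

lemma bondMap_self {n : ℕ} (h : n ≤ n) (x : X n) : bondMap f h x = x := by
  unfold bondMap
  rw [Nat.leRecOn_self]
  rfl

lemma bondMap_succ {n m : ℕ} (h : n ≤ m) {h' : n ≤ m + 1} (x : X (m + 1)) :
    bondMap f h' x = bondMap f h (f m x) := by
  unfold bondMap
  rw [Nat.leRecOn_succ h]
  rfl

lemma bondMap_bondMap {n k m : ℕ} (h₁ : n ≤ k) (h₂ : k ≤ m) (x : X m) :
    bondMap f h₁ (bondMap f h₂ x) = bondMap f (h₁.trans h₂) x := by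
  induction m, h₂ using Nat.le_induction with
  | base => rw [bondMap_self f]
  | succ m h ih =>
    rw [bondMap_succ f h, bondMap_succ f (h₁.trans h)]
    exact ih _

lemma bondMap_apply_of_mem_invLim {z : ∀ k, X k} (hz : z ∈ invLim X f) {n m : ℕ}
    (h : n ≤ m) : bondMap f h (z m) = z n := by
  induction m, h using Nat.le_induction with
  | base => exact bondMap_self f _ _
  | succ m h ih => rw [bondMap_succ f h, ← hz m, ih]

end BondMap

lemma bondMap_mem_Ttrans_bondMap {X Y : ℕ → Type*} {f : ∀ n, X (n + 1) → X n}
    {fY : ∀ n, Y (n + 1) → Y n} (g : ↥(invLim X f) → ↥(invLim Y fY))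
    {n n' m m' : ℕ} (hn : n' ≤ n) (hm : m' ≤ m) {x : X m} {y : Y n}
    (hy : y ∈ Ttrans g n m x) : bondMap fY hn y ∈ Ttrans g n' m' (bondMap f hm x) := by
  obtain ⟨z, rfl, rfl⟩ := hy
  exact ⟨z, (bondMap_apply_of_mem_invLim f z.2 hm).symm,
    (bondMap_apply_of_mem_invLim fY (g z).2 hn).symm⟩

theorem stmt1_general
    {X : ℕ → Type*}
    (f : ∀ n, X (n + 1) → X n)
    (g : ↥(invLim X f) → ↥(invLim X f))
    (n₀ m₀ : ℕ) (h₀ : n₀ ≤ m₀)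
    (hyp : ∀ x : X m₀, bondMap f h₀ x ∉ Ttrans g n₀ m₀ x) :
    ∀ n m : ℕ, ∀ h : n ≤ m, n₀ ≤ n → m₀ ≤ m →
      ∀ x : X m, bondMap f h x ∉ Ttrans g n m x := by
  intro n m h hn hm x hx
  apply hyp (bondMap f hm x)
  have hpushed := bondMap_mem_Ttrans_bondMap g hn hm hx
  rwa [bondMap_bondMap, ← bondMap_bondMap f h₀ hm] at hpushed

theorem stmt1
    {X : ℕ → Type*} [∀ n, MetricSpace (X n)] [∀ n, CompactSpace (X n)]
    (f : ∀ n, X (n + 1) → X n)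
    (hfc : ∀ n, Continuous (f n)) (hfs : ∀ n, Surjective (f n))
    (g : ↥(invLim X f) → ↥(invLim X f)) (hg : Continuous g)
    (n₀ m₀ : ℕ) (h₀ : n₀ ≤ m₀)
    (hyp : ∀ x : X m₀, bondMap f h₀ x ∉ Ttrans g n₀ m₀ x) :
    ∀ n m : ℕ, ∀ h : n ≤ m, n₀ ≤ n → m₀ ≤ m →
      ∀ x : X m, bondMap f h x ∉ Ttrans g n m x :=
  stmt1_general f g n₀ m₀ h₀ hyp
end

section
/- Let {X_ℓ, f_ℓ} and {Y_ℓ, g_ℓ} be inverse sequences of compact metric spaces with surjective continuous bonding functions, let g : varprojlim{X_ℓ, f_ℓ} → varprojlim{Y_ℓ, g_ℓ} be a continuous function, let ε > 0 and let n be a positive integer. Then there is a positive integer m₀ such that for each positive integer m ≥ m₀: (1) diam(T_{n,m}(g)(x)) < ε for every x ∈ X_m, and (2) q_n(g(x)) ∈ T_{n,m}(g)(p_m(x)) for each x ∈ varprojlim{X_ℓ, f_ℓ}. -/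
open Metric Filter Set Function Uniformity

/-!
The composite `z ↦ q_n (g z)` is uniformly continuous on the compact space `lim← {X_ℓ, f_ℓ}`, and
the product uniformity is generated by finitely many coordinates, so points agreeing at enough
coordinates have images closer than `ε / 2`. Two points of the inverse limit with the same `m`-th
coordinate agree at all coordinates `i ≤ m`, so the diameter bound holds as soon as `m` bounds those
coordinates.
-/

theorem Pi.exists_finset_setOf_forall_eq_subset {ι : Type*} {X : ι → Type*}
    [∀ i, UniformSpace (X i)] {U : Set ((∀ i, X i) × (∀ i, X i))} (hU : U ∈ 𝓤 (∀ i, X i)) :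
    ∃ I : Finset ι, {p | ∀ i ∈ I, p.1 i = p.2 i} ⊆ U := by
  rw [Pi.uniformity, mem_iInf_finite] at hU
  obtain ⟨I, hI⟩ := hU
  obtain ⟨V, hV, rfl⟩ := mem_iInf_finset.1 hI
  refine ⟨I, fun p hp => mem_iInter₂.2 fun i hi => ?_⟩
  obtain ⟨W, hW, hWV⟩ := mem_comap.1 (hV i hi)
  apply hWV
  change (p.1 i, p.2 i) ∈ W
  rw [hp i hi]
  exact refl_mem_uniformity hW

theorem UniformContinuous.exists_finset_forall_eq_imp_mem {ι : Type*} {X : ι → Type*}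
    [∀ i, UniformSpace (X i)] {β : Type*} [UniformSpace β] {s : Set (∀ i, X i)} {φ : s → β}
    (hφ : UniformContinuous φ) {V : Set (β × β)} (hV : V ∈ 𝓤 β) :
    ∃ I : Finset ι, ∀ z w : s, (∀ i ∈ I, z.1 i = w.1 i) → (φ z, φ w) ∈ V := by
  have hφV := hφ hV
  rw [uniformity_subtype, mem_map, mem_comap] at hφV
  obtain ⟨U, hU, hUV⟩ := hφV
  obtain ⟨I, hIU⟩ := Pi.exists_finset_setOf_forall_eq_subset hU
  exact ⟨I, fun z w hzw => @hUV (z, w) (hIU hzw)⟩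

section InverseLimit

variable {X : ℕ → Type*} {f : ∀ n, X (n + 1) → X n}

theorem isClosed_invLim [∀ n, TopologicalSpace (X n)] [∀ n, T2Space (X n)]
    (hfc : ∀ n, Continuous (f n)) : IsClosed (invLim X f) := by
  have : invLim X f = ⋂ k, {x : ∀ n, X n | x k = f k (x (k + 1))} := by
    ext x
    simp [invLim]
  rw [this]
  exact isClosed_iInter fun k =>
    isClosed_eq (continuous_apply k) ((hfc k).comp (continuous_apply (k + 1)))

theorem compactSpace_invLim [∀ n, TopologicalSpace (X n)] [∀ n, T2Space (X n)]
    [∀ n, CompactSpace (X n)] (hfc : ∀ n, Continuous (f n)) : CompactSpace (invLim X f) :=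
  isCompact_iff_compactSpace.1 (isClosed_invLim hfc).isCompact

theorem invLim_apply_eq_of_le {z w : ∀ n, X n} (hz : z ∈ invLim X f) (hw : w ∈ invLim X f)
    {i m : ℕ} (him : i ≤ m) (h : z m = w m) : z i = w i := by
  induction m, him using Nat.le_induction with
  | base => exact h
  | succ m _ ih =>
    apply ih
    rw [hz m, hw m, h]

end InverseLimit

section Ttrans

variable {X Y : ℕ → Type*} {f : ∀ n, X (n + 1) → X n} {gs : ∀ n, Y (n + 1) → Y n}
  (g : invLim X f → invLim Y gs) (n m : ℕ)

theorem apply_mem_Ttrans (z : invLim X f) : (g z).1 n ∈ Ttrans g n m (z.1 m) :=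
  ⟨z, rfl, rfl⟩

theorem diam_Ttrans_le [∀ n, PseudoMetricSpace (Y n)] {δ : ℝ} (hδ : 0 ≤ δ)
    (h : ∀ z w : invLim X f, z.1 m = w.1 m → dist ((g z).1 n) ((g w).1 n) ≤ δ) (x : X m) :
    diam (Ttrans g n m x) ≤ δ := by
  apply diam_le_of_forall_dist_le hδ
  rintro _ ⟨z, rfl, rfl⟩ _ ⟨w, hzw, rfl⟩
  exact h z w hzw.symm

end Ttrans

theorem stmt3_general
    {X Y : ℕ → Type*} [∀ n, MetricSpace (X n)] [∀ n, CompactSpace (X n)]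
    [∀ n, MetricSpace (Y n)]
    (f : ∀ n, X (n + 1) → X n) (gs : ∀ n, Y (n + 1) → Y n)
    (hfc : ∀ n, Continuous (f n))
    (g : ↥(invLim X f) → ↥(invLim Y gs)) (hg : Continuous g)
    (ε : ℝ) (hε : 0 < ε) (n : ℕ) :
    ∃ m₀ : ℕ, ∀ m : ℕ, m₀ ≤ m →
      (∀ x : X m, diam (Ttrans g n m x) < ε) ∧
      (∀ z : ↥(invLim X f), (g z).1 n ∈ Ttrans g n m (z.1 m)) := by
  have := compactSpace_invLim hfc
  have hφ : UniformContinuous fun z => (g z).1 n :=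
    CompactSpace.uniformContinuous_of_continuous ((continuous_apply n).comp hg.subtype_val)
  obtain ⟨I, hI⟩ := hφ.exists_finset_forall_eq_imp_mem (dist_mem_uniformity (half_pos hε))
  obtain ⟨m₀, hm₀⟩ := I.bddAbove
  refine ⟨m₀, fun m hm => ⟨fun x => ?_, apply_mem_Ttrans g n m⟩⟩
  have hdiam : diam (Ttrans g n m x) ≤ ε / 2 :=
    diam_Ttrans_le g n m (half_pos hε).le (fun z w hzw => (hI z w fun i hi =>
      invLim_apply_eq_of_le z.2 w.2 ((hm₀ hi).trans hm) hzw).le) x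
  linarith

theorem stmt3
    {X Y : ℕ → Type*} [∀ n, MetricSpace (X n)] [∀ n, CompactSpace (X n)]
    [∀ n, MetricSpace (Y n)] [∀ n, CompactSpace (Y n)]
    (f : ∀ n, X (n + 1) → X n) (gs : ∀ n, Y (n + 1) → Y n)
    (hfc : ∀ n, Continuous (f n)) (hfs : ∀ n, Surjective (f n))
    (hgc : ∀ n, Continuous (gs n)) (hgs : ∀ n, Surjective (gs n))
    (g : ↥(invLim X f) → ↥(invLim Y gs)) (hg : Continuous g)
    (ε : ℝ) (hε : 0 < ε) (n : ℕ) :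
    ∃ m₀ : ℕ, ∀ m : ℕ, m₀ ≤ m →
      (∀ x : X m, diam (Ttrans g n m x) < ε) ∧
      (∀ z : ↥(invLim X f), (g z).1 n ∈ Ttrans g n m (z.1 m)) :=
  stmt3_general f gs hfc g hg ε hε n
end

section
/- Let {X_ℓ, f_ℓ} and {Y_ℓ, g_ℓ} be inverse sequences of compact metric spaces with surjective continuous bonding functions, let (n_ℓ) and (m_ℓ) be sequences of positive integers with m_{k+1} ≥ m_k, n_{k+1} > n_k, and m_k ≥ n_k for each k, and let (H_ℓ) be a sequence of upper semicontinuous set-valued functions H_ℓ : X_{m_ℓ} ⊸ Y_{n_ℓ} such that for each positive integer j and each x ∈ varprojlim{X_ℓ, f_ℓ}, lim_{k→∞} diam(g_{j,n_k}(H_k(p_{m_k}(x)))) = 0. If f, g : varprojlim{X_ℓ, f_ℓ} → varprojlim{Y_ℓ, g_ℓ} are continuous functions such that for every positive integer k, every j ∈ {1, …, n_k}, and every x ∈ varprojlim{X_ℓ, f_ℓ}, both q_j(g(x)) ∈ g_{j,n_k}(H_k(p_{m_k}(x))) and q_j(f(x)) ∈ g_{j,n_k}(H_k(p_{m_k}(x))),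 then f = g. -/
open Metric Filter Set Function

theorem eq_of_eventually_mem_of_tendsto_diam {ι α : Type*} [MetricSpace α] {l : Filter ι}
    [l.NeBot] {s : ι → Set α} {x y : α} (hbdd : ∀ᶠ i in l, Bornology.IsBounded (s i))
    (hx : ∀ᶠ i in l, x ∈ s i) (hy : ∀ᶠ i in l, y ∈ s i)
    (hdiam : Tendsto (fun i => diam (s i)) l (nhds 0)) : x = y := by
  have hle : ∀ᶠ i in l, dist x y ≤ diam (s i) := by
    filter_upwards [hbdd, hx, hy] with i hb hxi hyi
    exact dist_le_diam_of_mem hb hxi hyi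
  exact dist_le_zero.mp (ge_of_tendsto hdiam hle)

theorem stmt8_general
    {X Y : ℕ → Type*}
    [∀ n, MetricSpace (Y n)] [∀ n, CompactSpace (Y n)]
    (f : ∀ n, X (n + 1) → X n) (gs : ∀ n, Y (n + 1) → Y n)
    (ns ms : ℕ → ℕ)
    (hns : ∀ k, ns k < ns (k + 1))
    (H : ∀ k, X (ms k) → Set (Y (ns k)))
    (hb : ∀ j : ℕ, ∀ z : ↥(invLim X f),
      Tendsto (fun k =>
          diam (if hj : j ≤ ns k then
            bondMap gs hj '' H k (z.1 (ms k))
          else (∅ : Set (Y j))))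
        atTop (nhds (0 : ℝ)))
    (φ ψ : ↥(invLim X f) → ↥(invLim Y gs))
    (hφmem : ∀ k j : ℕ, ∀ hj : j ≤ ns k, ∀ z : ↥(invLim X f),
      (φ z).1 j ∈ bondMap gs hj '' H k (z.1 (ms k)))
    (hψmem : ∀ k j : ℕ, ∀ hj : j ≤ ns k, ∀ z : ↥(invLim X f),
      (ψ z).1 j ∈ bondMap gs hj '' H k (z.1 (ms k))) :
    φ = ψ := by
  funext z
  ext j
  have hj : ∀ᶠ k in atTop, j ≤ ns k :=
    (strictMono_nat_of_lt_succ hns).tendsto_atTop.eventually_ge_atTop j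
  refine eq_of_eventually_mem_of_tendsto_diam (.of_forall fun _ => isBounded_of_compactSpace)
    ?_ ?_ (hb j z)
  · filter_upwards [hj] with k hk
    simpa only [dif_pos hk] using hφmem k j hk z
  · filter_upwards [hj] with k hk
    simpa only [dif_pos hk] using hψmem k j hk z

theorem stmt8
    {X Y : ℕ → Type*} [∀ n, MetricSpace (X n)] [∀ n, CompactSpace (X n)]
    [∀ n, MetricSpace (Y n)] [∀ n, CompactSpace (Y n)]
    (f : ∀ n, X (n + 1) → X n) (gs : ∀ n, Y (n + 1) → Y n)
    (hfc : ∀ n, Continuous (f n)) (hfs : ∀ n, Surjective (f n))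
    (hgc : ∀ n, Continuous (gs n)) (hgs : ∀ n, Surjective (gs n))
    (ns ms : ℕ → ℕ)
    (hms : ∀ k, ms k ≤ ms (k + 1)) (hns : ∀ k, ns k < ns (k + 1))
    (hnm : ∀ k, ns k ≤ ms k)
    (H : ∀ k, X (ms k) → Set (Y (ns k))) (hH : ∀ k, IsUSC (H k))
    (hb : ∀ j : ℕ, ∀ z : ↥(invLim X f),
      Tendsto (fun k =>
          diam (if hj : j ≤ ns k then
            bondMap gs hj '' H k (z.1 (ms k))
          else (∅ : Set (Y j))))
        atTop (nhds (0 : ℝ)))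
    (φ ψ : ↥(invLim X f) → ↥(invLim Y gs))
    (hφ : Continuous φ) (hψ : Continuous ψ)
    (hφmem : ∀ k j : ℕ, ∀ hj : j ≤ ns k, ∀ z : ↥(invLim X f),
      (φ z).1 j ∈ bondMap gs hj '' H k (z.1 (ms k)))
    (hψmem : ∀ k j : ℕ, ∀ hj : j ≤ ns k, ∀ z : ↥(invLim X f),
      (ψ z).1 j ∈ bondMap gs hj '' H k (z.1 (ms k))) :
    φ = ψ :=
  stmt8_general f gs ns ms hns H hb φ ψ hφmem hψmem
end

section
/- Let {X_ℓ, F_ℓ} be an inverse sequence of compact metric spaces X_ℓ with upper semicontinuous set-valued bonding functions F_ℓ : X_{ℓ+1} ⊸ X_ℓ. The following are equivalent: (1) the inverse limit lim⊸{X_ℓ, F_ℓ} does not have the fixed point property; (2) there is a sequence (H_ℓ) of upper semicontinuous set-valued functions H_ℓ : ⋆_{i=1}^{ℓ+1}Γ(F_i⁻¹) ⊸ ⋆_{i=1}^{ℓ}Γ(F_i⁻¹) such that (a) for each positive integer k, each (x_1, …, x_{k+3}) ∈ ⋆_{i=1}^{k+2}Γ(F_i⁻¹) and each (z_1, …, z_{k+2})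 ∈ H_{k+1}(x_1, …, x_{k+3}), one has (z_1, …, z_{k+1}) ∈ H_k(x_1, …, x_{k+2}); (b) for each positive integer j and each x = (x_1, x_2, …) ∈ lim⊸{X_ℓ, F_ℓ}, lim_{k→∞} diam(𝓗_{j,k}(x)) = 0, where for k > j, 𝓗_{j,k}(x) is the set of all (z_1, …, z_{j+1}) ∈ ⋆_{i=1}^{j}Γ(F_i⁻¹) for which there exists (y_1, …, y_{k+1}) ∈ H_k(x_1, …, x_{k+2}) with (y_1, …, y_{j+1}) = (z_1, …, z_{j+1}); and (c) there is a positive integer k such that (x_1, …, x_{k+1}) ∉ H_k(x_1, …, x_{k+2}) for each (x_1, …, x_{k+2}) ∈ ⋆_{i=1}^{k+1}Γ(F_i⁻¹). -/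
/-!
Let `g` be a fixed-point-free self-map of the inverse limit `L`. Fix a product metric on `∏ X_n` and
let `H_k(x)` consist of the first coordinates of `g q`, for `q` ranging over the points of `L`
nearest to some sequence beginning with `x`. A point of `L` beginning with `x` is within
`O(2^{-k})` of every such `q`, so continuity of `g` gives (b); and `(x_1, …, x_{k+1}) ∈ H_k(x)`
would give a `q` with `d(q, g q) = O(2^{-k})`, whereas `d(q, g q)` is bounded below on the compact
space `L`, which gives (c). (If some Mahavier product is empty, so is `L`, and the truncations
`H_k(x) = {(x_1, …, x_{k+1})}` work.)

Conversely, by (a) the sets of sequences whose first coordinates lie in `H_k(x_1, …, x_{k+2})` are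
nested, so they meet, and by (b) they meet in a single point `g x`. The graph of `g` is closed
because those of the `H_k` are, so `g` is continuous on the compact space `L`, and a fixed point
of `g` would contradict (c).
-/

open Metric Filter Set Function

/-- The inverse limit of an inverse sequence `{X n, F n}` of spaces with
set-valued bonding functions `F n : X (n+1) ⊸ X n`. -/
def invLimSV (X : ℕ → Type*) (F : ∀ n, X (n + 1) → Set (X n)) : Set (∀ n, X n) :=
  {x | ∀ n, x n ∈ F n (x (n + 1))}

/-- The Mahavier product `⋆_{i=0}^{n-1} Γ(F_i⁻¹)`: all tuples `(x_0, …, x_n)`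
with `x_i ∈ F i (x_{i+1})` for all `i < n`. -/
def mahavier (X : ℕ → Type*) (F : ∀ n, X (n + 1) → Set (X n)) (n : ℕ) :
    Set (∀ i : Fin (n + 1), X i.1) :=
  {x | ∀ i : Fin n,
    x ⟨i.1, Nat.lt_succ_of_lt i.2⟩ ∈ F i.1 (x ⟨i.1 + 1, Nat.succ_lt_succ i.2⟩)}

open Topology

section General

variable {α β : Type*} [TopologicalSpace α] [TopologicalSpace β]

lemma isClosed_fiber_of_isClosed_graph {A : Set α} {H : α → Set β}
    (h : IsClosed {p : α × β | p.1 ∈ A ∧ p.2 ∈ H p.1}) {x : α} (hx : x ∈ A) :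
    IsClosed (H x) := by
  simpa [hx] using h.preimage (Continuous.prodMk_right x)

lemma continuous_of_isClosed_graph [CompactSpace β] {g : α → β}
    (h : IsClosed {p : α × β | g p.1 = p.2}) : Continuous g := by
  refine continuous_iff_isClosed.2 fun C hC => ?_
  convert isClosedMap_fst_of_compactSpace _ (h.inter (isClosed_univ.prod hC)) using 1
  ext x
  simp

lemma eq_of_forall_mem_of_tendsto_diam {Z ι : Type*} [MetricSpace Z] {l : Filter ι} [l.NeBot]
    {K : ι → Set Z} (hK : ∀ i, Bornology.IsBounded (K i))
    (hdiam : Tendsto (fun i => diam (K i)) l (𝓝 0)) {a b : Z} (ha : ∀ i, a ∈ K i)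
    (hb : ∀ i, b ∈ K i) : a = b :=
  dist_le_zero.1 <| ge_of_tendsto' hdiam fun i => dist_le_diam_of_mem (hK i) (ha i) (hb i)

lemma tendsto_diam_of_forall_eventually_subset_closedBall {Z ι : Type*} [PseudoMetricSpace Z]
    {l : Filter ι} {K : ι → Set Z} {a : Z} (h : ∀ ε > 0, ∀ᶠ i in l, K i ⊆ closedBall a ε) :
    Tendsto (fun i => diam (K i)) l (𝓝 0) := by
  refine Metric.tendsto_nhds.2 fun ε hε => ?_
  filter_upwards [h (ε / 3) (by positivity)] with i hi
  rw [Real.dist_0_eq_abs, abs_of_nonneg diam_nonneg]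
  calc diam (K i) ≤ diam (closedBall a (ε / 3)) := diam_mono hi isBounded_closedBall
    _ ≤ 2 * (ε / 3) := diam_closedBall (by positivity)
    _ < ε := by linarith

lemma dist_le_two_mul_of_dist_eq_infDist {Z : Type*} [PseudoMetricSpace Z] {s : Set Z}
    {p q r : Z} (hpq : dist p q = infDist p s) (hr : r ∈ s) : dist q r ≤ 2 * dist p r := by
  linarith [dist_triangle_left q r p, infDist_le_dist_of_mem (x := p) hr]

end General

section

variable {X : ℕ → Type*}

def truncTuple {m n : ℕ} (h : m ≤ n) (x : ∀ i : Fin n, X i) : ∀ i : Fin m, X i :=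
  fun i => x ⟨i, i.2.trans_le h⟩

def seqPrefix (p : ∀ n, X n) (m : ℕ) : ∀ i : Fin m, X i :=
  fun i => p i

def seqExtend {m : ℕ} (x : ∀ i : Fin m, X i) (p : ∀ n, X n) : ∀ n, X n :=
  fun n => if h : n < m then x ⟨n, h⟩ else p n

@[simp]
lemma seqPrefix_seqExtend {m : ℕ} (x : ∀ i : Fin m, X i) (p : ∀ n, X n) :
    seqPrefix (seqExtend x p) m = x := by
  funext i
  simp [seqPrefix, seqExtend]

@[fun_prop]
lemma continuous_seqPrefix [∀ n, TopologicalSpace (X n)] (m : ℕ) :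
    Continuous fun p : ∀ n, X n => seqPrefix p m :=
  continuous_pi fun _ => continuous_apply _

@[fun_prop]
lemma continuous_truncTuple [∀ n, TopologicalSpace (X n)] {m n : ℕ} (h : m ≤ n) :
    Continuous (truncTuple (X := X) h) :=
  continuous_pi fun _ => continuous_apply _

section Mahavier

variable {F : ∀ n, X (n + 1) → Set (X n)}

lemma truncTuple_mem_mahavier {m n : ℕ} (h : m + 1 ≤ n + 1) {x : ∀ i : Fin (n + 1), X i}
    (hx : x ∈ mahavier X F n) : truncTuple h x ∈ mahavier X F m :=
  fun i => hx ⟨i, by omega⟩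

lemma seqPrefix_mem_mahavier {p : ∀ n, X n} (hp : p ∈ invLimSV X F) (n : ℕ) :
    seqPrefix p (n + 1) ∈ mahavier X F n :=
  fun i => hp i

lemma mem_invLimSV_of_seqPrefix_mem {p : ∀ n, X n}
    (h : ∀ n, seqPrefix p (n + 2) ∈ mahavier X F (n + 1)) : p ∈ invLimSV X F :=
  fun n => h n ⟨n, n.lt_succ_self⟩

variable [∀ n, TopologicalSpace (X n)]

lemma isClosed_mahavier (hF : ∀ n, IsUSC (F n)) (n : ℕ) : IsClosed (mahavier X F n) := by
  simp only [mahavier, ofPred_forall]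
  exact isClosed_iInter fun i => (hF i).2.2.preimage (by fun_prop)
    (f := fun x : ∀ j : Fin (n + 1), X j =>
      (x ⟨i + 1, Nat.succ_lt_succ i.2⟩, x ⟨i, Nat.lt_succ_of_lt i.2⟩))

lemma isClosed_invLimSV (hF : ∀ n, IsUSC (F n)) : IsClosed (invLimSV X F) := by
  simp only [invLimSV, ofPred_forall]
  exact isClosed_iInter fun n => (hF n).2.2.preimage
    (f := fun p : ∀ n, X n => (p (n + 1), p n)) (by fun_prop)

variable [∀ n, CompactSpace (X n)]

lemma compactSpace_invLimSV (hF : ∀ n, IsUSC (F n)) : CompactSpace (invLimSV X F) :=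
  isCompact_iff_compactSpace.mp (isClosed_invLimSV hF).isCompact

lemma invLimSV_nonempty (hF : ∀ n, IsUSC (F n)) (hM : ∀ n, (mahavier X F n).Nonempty) :
    (invLimSV X F).Nonempty := by
  let a : ∀ n, X n := fun n => (hM n).some ⟨n, n.lt_succ_self⟩
  let S (n : ℕ) : Set (∀ n, X n) := (seqPrefix · (n + 2)) ⁻¹' mahavier X F (n + 1)
  have hclosed (n : ℕ) : IsClosed (S n) :=
    (isClosed_mahavier hF _).preimage (continuous_seqPrefix _)
  obtain ⟨p, hp⟩ := IsCompact.nonempty_iInter_of_sequence_nonempty_isCompact_isClosed S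
    (fun n p hp => truncTuple_mem_mahavier (by omega) hp)
    (fun n => ⟨seqExtend (hM (n + 1)).some a, by simpa [S] using (hM (n + 1)).some_mem⟩)
    (hclosed 0).isCompact hclosed
  exact ⟨p, mem_invLimSV_of_seqPrefix_mem (mem_iInter.1 hp)⟩

end Mahavier

section System

variable {F : ∀ n, X (n + 1) → Set (X n)}
  {H : ∀ k, (∀ i : Fin (k + 3), X i) → Set (∀ i : Fin (k + 2), X i)}

variable (F) in
/-- The set `𝓗_{j,t+j+1}(x)` of the paper. -/
def calH (H : ∀ k, (∀ i : Fin (k + 3), X i) → Set (∀ i : Fin (k + 2), X i)) (j t : ℕ)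
    (x : ∀ n, X n) : Set (∀ i : Fin (j + 1), X i) :=
  {z | z ∈ mahavier X F j ∧ ∃ y ∈ H (t + j) (seqPrefix x (t + j + 3)),
    ∀ i : Fin (j + 1),
      y ⟨i, i.2.trans_le (Nat.le_succ_of_le (Nat.succ_le_succ (Nat.le_add_left j t)))⟩ = z i}

variable [∀ n, MetricSpace (X n)]

variable (F H) in
/-- Condition (2) of the theorem, with the paper's `H_{k+1}` written `H k`. -/
structure IsFixedPointFreeSystem : Prop where
  nonempty : ∀ k, ∀ x ∈ mahavier X F (k + 2), (H k x).Nonempty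
  subset_mahavier : ∀ k, ∀ x ∈ mahavier X F (k + 2), H k x ⊆ mahavier X F (k + 1)
  isClosed_graph : ∀ k, IsClosed {p : (∀ i : Fin (k + 3), X i) × (∀ i : Fin (k + 2), X i) |
    p.1 ∈ mahavier X F (k + 2) ∧ p.2 ∈ H k p.1}
  truncTuple_mem : ∀ k, ∀ x ∈ mahavier X F (k + 3), ∀ z ∈ H (k + 1) x,
    truncTuple (Nat.le_succ _) z ∈ H k (truncTuple (Nat.le_succ _) x)
  tendsto_diam : ∀ j, ∀ x ∈ invLimSV X F,
    Tendsto (fun t => diam (calH F H j t x)) atTop (𝓝 0)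
  exists_truncTuple_not_mem : ∃ k, ∀ x ∈ mahavier X F (k + 2), truncTuple (Nat.le_succ _) x ∉ H k x

variable (H) in
def IsInducedImage (x y : ∀ n, X n) : Prop :=
  ∀ k, seqPrefix y (k + 2) ∈ H k (seqPrefix x (k + 3))

namespace IsFixedPointFreeSystem

variable (hH : IsFixedPointFreeSystem F H)
include hH

lemma isClosed_setOf_isInducedImage :
    IsClosed {p : invLimSV X F × invLimSV X F | IsInducedImage H p.1 p.2} := by
  have : {p : invLimSV X F × invLimSV X F | IsInducedImage H p.1 p.2} =
      ⋂ k, (fun p : invLimSV X F × invLimSV X F =>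
        (seqPrefix (p.1 : ∀ n, X n) (k + 3), seqPrefix (p.2 : ∀ n, X n) (k + 2))) ⁻¹'
          {q | q.1 ∈ mahavier X F (k + 2) ∧ q.2 ∈ H k q.1} := by
    ext p
    simp [IsInducedImage, seqPrefix_mem_mahavier p.1.2]
  rw [this]
  exact isClosed_iInter fun k => (hH.isClosed_graph k).preimage (by fun_prop)

lemma exists_isInducedImage [∀ n, CompactSpace (X n)] (x : invLimSV X F) :
    ∃ y : invLimSV X F, IsInducedImage H x y := by
  let C (k : ℕ) : Set (∀ n, X n) := (seqPrefix · (k + 2)) ⁻¹' H k (seqPrefix x (k + 3))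
  have hC (k : ℕ) : IsClosed (C k) :=
    (isClosed_fiber_of_isClosed_graph (hH.isClosed_graph k)
      (seqPrefix_mem_mahavier x.2 _)).preimage (continuous_seqPrefix _)
  obtain ⟨y, hy⟩ := IsCompact.nonempty_iInter_of_sequence_nonempty_isCompact_isClosed C
    (fun k y hy => hH.truncTuple_mem k _ (seqPrefix_mem_mahavier x.2 _) _ hy)
    (fun k => by
      obtain ⟨z, hz⟩ := hH.nonempty k _ (seqPrefix_mem_mahavier x.2 (k + 2))
      exact ⟨seqExtend z x, by simpa [C] using hz⟩)
    (hC 0).isCompact hC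
  have hy : IsInducedImage H x y := mem_iInter.1 hy
  exact ⟨⟨y, mem_invLimSV_of_seqPrefix_mem fun k =>
    hH.subset_mahavier k _ (seqPrefix_mem_mahavier x.2 _) (hy k)⟩, hy⟩

lemma seqPrefix_mem_calH {x y : ∀ n, X n} (hx : x ∈ invLimSV X F) (hy : IsInducedImage H x y)
    (j t : ℕ) : seqPrefix y (j + 1) ∈ calH F H j t x :=
  ⟨truncTuple_mem_mahavier (by omega)
    (hH.subset_mahavier _ _ (seqPrefix_mem_mahavier hx _) (hy (t + j))), _, hy (t + j),
    fun _ => rfl⟩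

lemma isInducedImage_unique [∀ n, CompactSpace (X n)] {x y y' : ∀ n, X n}
    (hx : x ∈ invLimSV X F) (hy : IsInducedImage H x y) (hy' : IsInducedImage H x y') :
    y = y' := by
  funext n
  have := eq_of_forall_mem_of_tendsto_diam (fun _ => isBounded_of_compactSpace)
    (hH.tendsto_diam n x hx) (hH.seqPrefix_mem_calH hx hy n) (hH.seqPrefix_mem_calH hx hy' n)
  exact congrFun this ⟨n, n.lt_succ_self⟩

theorem not_hasFPP [∀ n, CompactSpace (X n)] (hF : ∀ n, IsUSC (F n)) :
    ¬ HasFPP (invLimSV X F) := by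
  intro hFPP
  have := compactSpace_invLimSV hF
  choose g hg using hH.exists_isInducedImage
  have hgraph : {p : invLimSV X F × invLimSV X F | g p.1 = p.2} =
      {p | IsInducedImage H p.1 p.2} := by
    ext ⟨x, y⟩
    constructor
    · rintro (rfl : g x = y)
      exact hg x
    · exact fun h => Subtype.ext (hH.isInducedImage_unique x.2 (hg x) h)
  obtain ⟨q, hq⟩ := hFPP g (continuous_of_isClosed_graph
    (hgraph ▸ hH.isClosed_setOf_isInducedImage))
  have hqq := hg q
  rw [hq] at hqq
  obtain ⟨k, hk⟩ := hH.exists_truncTuple_not_mem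
  exact hk _ (seqPrefix_mem_mahavier q.2 _) (hqq k)

end IsFixedPointFreeSystem

end System

section NearestPoints

variable [∀ n, MetricSpace (X n)]

/- A metric for the product topology, declared for `ℕ`-indexed products only: finite tuples keep
the sup metric, in which the diameters of condition (b) are measured. -/
noncomputable local instance : MetricSpace (∀ n, X n) := PiCountable.metricSpace

lemma dist_le_of_mem_cylinder {p q : ∀ n, X n} {m : ℕ} (h : p ∈ PiNat.cylinder q m) :
    dist p q ≤ 2 * 2⁻¹ ^ m := by
  have hs := PiCountable.dist_summable p q
  rw [PiCountable.dist_eq_tsum, ← hs.sum_add_tsum_nat_add m,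
    Finset.sum_eq_zero fun i hi => by
      rw [h i (Finset.mem_range.1 hi), dist_self, min_eq_right (by positivity)], zero_add]
  calc ∑' i, min ((2 : ℝ)⁻¹ ^ Encodable.encode (i + m)) (dist (p (i + m)) (q (i + m)))
      ≤ ∑' i, (2 : ℝ)⁻¹ ^ (i + m) :=
        ((summable_nat_add_iff m).2 hs).tsum_le_tsum (fun i => min_le_left _ _)
          ((summable_nat_add_iff m).2 (summable_geometric_of_lt_one (by norm_num) (by norm_num)))
    _ = 2 * 2⁻¹ ^ m := by simp_rw [pow_add, tsum_mul_right, tsum_geometric_inv_two]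

variable (L : Set (∀ n, X n))

def nearestOver {m : ℕ} (x : ∀ i : Fin m, X i) : Set L :=
  {q | ∃ p, seqPrefix p m = x ∧ dist p q = infDist p L}

lemma nearestOver_nonempty (hL : IsCompact L) {r : ∀ n, X n} (hr : r ∈ L) {m : ℕ}
    (x : ∀ i : Fin m, X i) : (nearestOver L x).Nonempty := by
  obtain ⟨q, hq, hd⟩ := hL.exists_infDist_eq_dist ⟨r, hr⟩ (seqExtend x r)
  exact ⟨⟨q, hq⟩, seqExtend x r, seqPrefix_seqExtend x r, hd.symm⟩

lemma nearestOver_subset_truncTuple {m m' : ℕ} (h : m' ≤ m) (x : ∀ i : Fin m, X i) :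
    nearestOver L x ⊆ nearestOver L (truncTuple h x) := by
  rintro q ⟨p, rfl, hp⟩
  exact ⟨p, rfl, hp⟩

lemma dist_le_of_mem_nearestOver {m m' : ℕ} {x : ∀ i : Fin m, X i} {q : L}
    (hq : q ∈ nearestOver L x) {r : ∀ n, X n} (hr : r ∈ L) (h : m' ≤ m)
    (hrx : seqPrefix r m' = truncTuple h x) : dist (q : ∀ n, X n) r ≤ 4 * 2⁻¹ ^ m' := by
  obtain ⟨p, rfl, hp⟩ := hq
  have hpr : p ∈ PiNat.cylinder r m' := fun i hi => congrFun hrx.symm ⟨i, hi⟩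
  calc dist (q : ∀ n, X n) r ≤ 2 * dist p r := dist_le_two_mul_of_dist_eq_infDist hp hr
    _ ≤ 2 * (2 * 2⁻¹ ^ m') := by gcongr; exact dist_le_of_mem_cylinder hpr
    _ = 4 * 2⁻¹ ^ m' := by ring

variable {L}

def nearestH (g : L → L) (k : ℕ) (x : ∀ i : Fin (k + 3), X i) : Set (∀ i : Fin (k + 2), X i) :=
  (fun q => seqPrefix (g q : ∀ n, X n) (k + 2)) '' nearestOver L x

variable {g : L → L}

lemma truncTuple_mem_nearestH {k : ℕ} {x : ∀ i : Fin (k + 4), X i}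
    {z : ∀ i : Fin (k + 3), X i} (hz : z ∈ nearestH g (k + 1) x) :
    truncTuple (Nat.le_succ _) z ∈ nearestH g k (truncTuple (Nat.le_succ _) x) := by
  obtain ⟨q, hq, rfl⟩ := hz
  exact ⟨q, nearestOver_subset_truncTuple L _ _ hq, rfl⟩

lemma isClosed_graph_nearestH [∀ n, CompactSpace (X n)] (hL : IsClosed L) (hg : Continuous g)
    {k : ℕ} {A : Set (∀ i : Fin (k + 3), X i)} (hA : IsClosed A) :
    IsClosed {p : (∀ i : Fin (k + 3), X i) × (∀ i : Fin (k + 2), X i) |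
      p.1 ∈ A ∧ p.2 ∈ nearestH g k p.1} := by
  have := isCompact_iff_compactSpace.mp hL.isCompact
  have hT : IsClosed {pq : (∀ n, X n) × L |
      seqPrefix pq.1 (k + 3) ∈ A ∧ dist pq.1 pq.2 = infDist pq.1 L} :=
    (hA.preimage (by fun_prop)).inter
      (isClosed_eq (by fun_prop) ((continuous_infDist_pt L).comp continuous_fst))
  convert (hT.isCompact.image (f := fun pq : (∀ n, X n) × L =>
    (seqPrefix pq.1 (k + 3), seqPrefix (g pq.2 : ∀ n, X n) (k + 2))) (by fun_prop)).isClosed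
    using 1
  ext ⟨x, y⟩
  constructor
  · rintro ⟨hx, q, ⟨p, rfl, hp⟩, rfl⟩
    exact ⟨(p, q), ⟨hx, hp⟩, rfl⟩
  · rintro ⟨⟨p, q⟩, ⟨hx, hp⟩, h⟩
    obtain ⟨rfl, rfl⟩ := Prod.ext_iff.1 h
    exact ⟨hx, q, ⟨p, rfl, hp⟩, rfl⟩

variable {F : ∀ n, X (n + 1) → Set (X n)}

lemma tendsto_diam_calH_nearestH (hg : Continuous g) {x : ∀ n, X n} (hx : x ∈ L) (j : ℕ) :
    Tendsto (fun t => diam (calH F (nearestH g) j t x)) atTop (𝓝 0) := by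
  let G : L → ∀ i : Fin (j + 1), X i := fun q => seqPrefix (g q : ∀ n, X n) (j + 1)
  have hGc : Continuous G := (continuous_seqPrefix _).comp (continuous_subtype_val.comp hg)
  refine tendsto_diam_of_forall_eventually_subset_closedBall (a := G ⟨x, hx⟩) fun ε hε => ?_
  obtain ⟨δ, hδ, hG⟩ := Metric.continuousAt_iff.1 (hGc.continuousAt (x := ⟨x, hx⟩)) ε hε
  obtain ⟨N, hN⟩ := exists_pow_lt_of_lt_one (by positivity : 0 < δ / 4)
    (by norm_num : (2 : ℝ)⁻¹ < 1)
  filter_upwards [eventually_ge_atTop N] with t ht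
  rintro z ⟨-, y, ⟨q, hq, rfl⟩, hz⟩
  have hqx : dist (q : ∀ n, X n) x < δ := calc
    dist (q : ∀ n, X n) x ≤ 4 * 2⁻¹ ^ (t + j + 3) :=
      dist_le_of_mem_nearestOver L hq hx le_rfl rfl
    _ ≤ 4 * 2⁻¹ ^ N := mul_le_mul_of_nonneg_left
      (pow_le_pow_of_le_one (by norm_num) (by norm_num) (by omega)) (by norm_num)
    _ < δ := by linarith
  rw [show z = G q from funext fun i => (hz i).symm, mem_closedBall]
  exact (hG hqx).le

lemma exists_truncTuple_not_mem_nearestH (hL : IsCompact L) (hne : L.Nonempty)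
    (hg : Continuous g) (hfix : ∀ q, g q ≠ q) :
    ∃ k, ∀ x, truncTuple (Nat.le_succ _) x ∉ nearestH g k x := by
  have := isCompact_iff_compactSpace.mp hL
  have := hne.to_subtype
  obtain ⟨q₀, -, hq₀⟩ := isCompact_univ.exists_isMinOn univ_nonempty
    (continuous_subtype_val.dist (continuous_subtype_val.comp hg)).continuousOn
  have hδ : 0 < dist (q₀ : ∀ n, X n) (g q₀) :=
    dist_pos.2 fun h => hfix q₀ (Subtype.ext h.symm)
  obtain ⟨k, hk⟩ := exists_pow_lt_of_lt_one (by positivity : 0 < dist (q₀ : ∀ n, X n) (g q₀) / 4)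
    (by norm_num : (2 : ℝ)⁻¹ < 1)
  refine ⟨k, fun x ⟨q, hq, hqx⟩ => ?_⟩
  have h1 := dist_le_of_mem_nearestOver L hq (g q).2 _ hqx
  have h2 : (2 : ℝ)⁻¹ ^ (k + 2) ≤ 2⁻¹ ^ k :=
    pow_le_pow_of_le_one (by norm_num) (by norm_num) (by omega)
  have h3 : dist (q₀ : ∀ n, X n) (g q₀) ≤ dist (q : ∀ n, X n) (g q) := hq₀ (mem_univ q)
  linarith

theorem isFixedPointFreeSystem_nearestH [∀ n, CompactSpace (X n)] (hF : ∀ n, IsUSC (F n))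
    (hne : (invLimSV X F).Nonempty) {g : invLimSV X F → invLimSV X F} (hg : Continuous g)
    (hfix : ∀ q, g q ≠ q) : IsFixedPointFreeSystem F (nearestH g) where
  nonempty _ x _ :=
    (nearestOver_nonempty _ (isClosed_invLimSV hF).isCompact hne.some_mem x).image _
  subset_mahavier _ _ _ := by
    rintro _ ⟨q, -, rfl⟩
    exact seqPrefix_mem_mahavier (g q).2 _
  isClosed_graph _ := isClosed_graph_nearestH (isClosed_invLimSV hF) hg (isClosed_mahavier hF _)
  truncTuple_mem _ _ _ _ hz := truncTuple_mem_nearestH hz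
  tendsto_diam j _ hx := tendsto_diam_calH_nearestH hg hx j
  exists_truncTuple_not_mem :=
    let ⟨k, hk⟩ := exists_truncTuple_not_mem_nearestH (isClosed_invLimSV hF).isCompact hne hg hfix
    ⟨k, fun x _ => hk x⟩

end NearestPoints

section Degenerate

variable [∀ n, MetricSpace (X n)] {F : ∀ n, X (n + 1) → Set (X n)}

theorem isFixedPointFreeSystem_truncTuple (hF : ∀ n, IsUSC (F n)) {n : ℕ}
    (hn : mahavier X F n = ∅) :
    IsFixedPointFreeSystem F fun _ x => {truncTuple (Nat.le_succ _) x} where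
  nonempty _ _ _ := singleton_nonempty _
  subset_mahavier _ _ hx := singleton_subset_iff.2 (truncTuple_mem_mahavier _ hx)
  isClosed_graph _ :=
    ((isClosed_mahavier hF _).preimage continuous_fst).inter
      (isClosed_eq continuous_snd (by fun_prop))
  truncTuple_mem _ _ _ _ hz := by
    rw [mem_singleton_iff.1 hz]
    rfl
  tendsto_diam _ _ hx := absurd (hn ▸ seqPrefix_mem_mahavier hx n) (notMem_empty _)
  exists_truncTuple_not_mem :=
    ⟨n, fun _ hx _ => notMem_empty _ (hn ▸ truncTuple_mem_mahavier (by omega) hx)⟩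

end Degenerate

theorem exists_isFixedPointFreeSystem [∀ n, MetricSpace (X n)] [∀ n, CompactSpace (X n)]
    {F : ∀ n, X (n + 1) → Set (X n)} (hF : ∀ n, IsUSC (F n)) (h : ¬ HasFPP (invLimSV X F)) :
    ∃ H, IsFixedPointFreeSystem F H := by
  by_cases hM : ∀ n, (mahavier X F n).Nonempty
  · obtain ⟨g, hg, hfix⟩ :
        ∃ g : invLimSV X F → invLimSV X F, Continuous g ∧ ∀ q, g q ≠ q := by
      by_contra! h'
      exact h h'
    exact ⟨_, isFixedPointFreeSystem_nearestH hF (invLimSV_nonempty hF hM) hg hfix⟩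
  · obtain ⟨n, hn⟩ : ∃ n, mahavier X F n = ∅ := by
      simpa [not_nonempty_iff_eq_empty] using hM
    exact ⟨_, isFixedPointFreeSystem_truncTuple hF hn⟩

end

theorem stmt16
    {X : ℕ → Type*} [∀ n, MetricSpace (X n)] [∀ n, CompactSpace (X n)]
    (F : ∀ n, X (n + 1) → Set (X n)) (hF : ∀ n, IsUSC (F n)) :
    (¬ HasFPP ↥(invLimSV X F)) ↔
    (∃ H : ∀ k : ℕ, (∀ i : Fin (k + 3), X i.1) → Set (∀ i : Fin (k + 2), X i.1),
      -- each `H k` is an upper semicontinuous set-valued function from the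
      -- Mahavier product `⋆_{i=1}^{k+2} Γ(F_i⁻¹)` to `⋆_{i=1}^{k+1} Γ(F_i⁻¹)`
      (∀ k, ∀ x ∈ mahavier X F (k + 2),
        (H k x).Nonempty ∧ IsClosed (H k x) ∧ H k x ⊆ mahavier X F (k + 1)) ∧
      (∀ k, IsClosed {p : (∀ i : Fin (k + 3), X i.1) × (∀ i : Fin (k + 2), X i.1) |
        p.1 ∈ mahavier X F (k + 2) ∧ p.2 ∈ H k p.1}) ∧
      -- (a)
      (∀ j : ℕ, ∀ x ∈ mahavier X F (j + 3), ∀ z ∈ H (j + 1) x,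
        (fun i : Fin (j + 2) => z ⟨i.1, lt_of_lt_of_le i.2 (by omega)⟩) ∈
          H j (fun i : Fin (j + 3) => x ⟨i.1, lt_of_lt_of_le i.2 (by omega)⟩)) ∧
      -- (b)
      (∀ j : ℕ, ∀ x : ↥(invLimSV X F),
        Tendsto (fun t : ℕ =>
            diam {z : ∀ i : Fin (j + 1), X i.1 |
              z ∈ mahavier X F j ∧
              ∃ y ∈ H (t + j) (fun i : Fin (t + j + 3) => x.1 i.1),
                ∀ i : Fin (j + 1), y ⟨i.1, lt_of_lt_of_le i.2 (by omega)⟩ = z i})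
          atTop (nhds (0 : ℝ))) ∧
      -- (c)
      (∃ k : ℕ, ∀ x ∈ mahavier X F (k + 2),
        (fun i : Fin (k + 2) => x ⟨i.1, lt_of_lt_of_le i.2 (by omega)⟩) ∉ H k x)) := by
  constructor
  · intro hL
    obtain ⟨H, hH⟩ := exists_isFixedPointFreeSystem hF hL
    exact ⟨H, fun k x hx => ⟨hH.nonempty k x hx,
      isClosed_fiber_of_isClosed_graph (hH.isClosed_graph k) hx, hH.subset_mahavier k x hx⟩,
      hH.isClosed_graph, hH.truncTuple_mem, fun j x => hH.tendsto_diam j x x.2,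
      hH.exists_truncTuple_not_mem⟩
  · rintro ⟨H, hval, hgraph, ha, hb, hc⟩
    exact IsFixedPointFreeSystem.not_hasFPP
      { nonempty := fun k x hx => (hval k x hx).1
        subset_mahavier := fun k x hx => (hval k x hx).2.2
        isClosed_graph := hgraph
        truncTuple_mem := ha
        tendsto_diam := fun j x hx => hb j ⟨x, hx⟩
        exists_truncTuple_not_mem := hc } hF
end

section
/- Let {X_ℓ, F_ℓ}_{ℓ≥0} be an inverse sequence of compact metric spaces X_ℓ and upper semicontinuous set-valued functions F_ℓ : X_{ℓ+1} ⊸ X_ℓ (for ℓ ≥ 0), and let g_ℓ : X_{ℓ+1} → X_ℓ (for ℓ ≥ 1) be continuous single-valued functions such that for each positive integer ℓ and each x ∈ X_{ℓ+2}, g_ℓ(F_{ℓ+1}(x)) ⊆ F_ℓ(g_{ℓ+1}(x)). If there is an upper semicontinuous set-valued function G_0 : X_1 ⊸ X_0 such that (1) G_0(F_1(x)) ⊆ F_0(g_1(x)) for every x ∈ X_2, and (2) G_0(x) ⊄ F_0(x) for every x ∈ X_1, then the inverse limit lim⊸{X_ℓ, F_ℓ}_{ℓ≥1} does not have the fixed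 point property. -/
/-!
The maps `g` induce a continuous shift `x ↦ (g_ℓ(x_{ℓ+1}))_ℓ` of the inverse limit into itself;
the compatibility condition is exactly what keeps the shifted sequence in the inverse limit.
A fixed point `x` satisfies `x_1 ∈ F_1(x_2)` and `g_1(x_2) = x_1`, so by (1)
`G_0(x_1) ⊆ G_0(F_1(x_2)) ⊆ F_0(g_1(x_2)) = F_0(x_1)`, contradicting (2).
Indices are shifted by one in the code: the paper's `x_1`, `g_1` are `x 0`, `g 0`.
-/

open Metric Filter Set Function

section Shift

variable {X : ℕ → Type*} {F : ∀ n, X (n + 1) → Set (X n)} {g : ∀ n, X (n + 1) → X n}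

theorem shift_mem_invLimSV (hcomm : ∀ n x, g n '' F (n + 1) x ⊆ F n (g (n + 1) x))
    {x : ∀ n, X n} (hx : x ∈ invLimSV X F) :
    (fun n => g n (x (n + 1))) ∈ invLimSV X F :=
  fun n => hcomm n (x (n + 2)) (mem_image_of_mem (g n) (hx (n + 1)))

variable [∀ n, TopologicalSpace (X n)]

def invLimSVShift (hcomm : ∀ n x, g n '' F (n + 1) x ⊆ F n (g (n + 1) x))
    (hg : ∀ n, Continuous (g n)) : C(invLimSV X F, invLimSV X F) where
  toFun x := ⟨fun n => g n (x.1 (n + 1)), shift_mem_invLimSV hcomm x.2⟩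
  continuous_toFun := by
    refine Continuous.subtype_mk (continuous_pi fun n => ?_) _
    exact (hg n).comp ((continuous_apply (n + 1)).comp continuous_subtype_val)

theorem exists_shift_fixed_of_hasFPP (hcomm : ∀ n x, g n '' F (n + 1) x ⊆ F n (g (n + 1) x))
    (hg : ∀ n, Continuous (g n)) (hfpp : HasFPP (invLimSV X F)) :
    ∃ x ∈ invLimSV X F, ∀ n, g n (x (n + 1)) = x n := by
  obtain ⟨p, hp⟩ := hfpp _ (invLimSVShift hcomm hg).continuous
  exact ⟨p.1, p.2, fun n => congrFun (congrArg Subtype.val hp) n⟩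

end Shift

theorem stmt17_general
    {X : ℕ → Type*} [∀ n, MetricSpace (X n)]
    (F : ∀ n, X (n + 1) → Set (X n))
    (g : ∀ n : ℕ, X (n + 2) → X (n + 1)) (hgc : ∀ n, Continuous (g n))
    (hcomm : ∀ n : ℕ, ∀ x : X (n + 3), g n '' F (n + 2) x ⊆ F (n + 1) (g (n + 1) x))
    (G0 : X 1 → Set (X 0))
    (h1 : ∀ x : X 2, (⋃ a ∈ F 1 x, G0 a) ⊆ F 0 (g 0 x))
    (h2 : ∀ x : X 1, ¬ G0 x ⊆ F 0 x) :
    ¬ HasFPP ↥(invLimSV (fun n => X (n + 1)) (fun n => F (n + 1))) := by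
  intro hfpp
  obtain ⟨x, hx, hfix⟩ := exists_shift_fixed_of_hasFPP hcomm hgc hfpp
  apply h2 (x 0)
  calc G0 (x 0) ⊆ ⋃ a ∈ F 1 (x 1), G0 a := subset_biUnion_of_mem (hx 0)
    _ ⊆ F 0 (g 0 (x 1)) := h1 (x 1)
    _ = F 0 (x 0) := by rw [hfix 0]

theorem stmt17
    {X : ℕ → Type*} [∀ n, MetricSpace (X n)] [∀ n, CompactSpace (X n)]
    (F : ∀ n, X (n + 1) → Set (X n)) (hF : ∀ n, IsUSC (F n))
    (g : ∀ n : ℕ, X (n + 2) → X (n + 1)) (hgc : ∀ n, Continuous (g n))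
    (hcomm : ∀ n : ℕ, ∀ x : X (n + 3), g n '' F (n + 2) x ⊆ F (n + 1) (g (n + 1) x))
    (G0 : X 1 → Set (X 0)) (hG0 : IsUSC G0)
    (h1 : ∀ x : X 2, (⋃ a ∈ F 1 x, G0 a) ⊆ F 0 (g 0 x))
    (h2 : ∀ x : X 1, ¬ G0 x ⊆ F 0 x) :
    ¬ HasFPP ↥(invLimSV (fun n => X (n + 1)) (fun n => F (n + 1))) :=
  stmt17_general F g hgc hcomm G0 h1 h2
end

section
/- Let {X_ℓ, f_ℓ}_{ℓ≥0} be an inverse sequence of compact metric spaces X_ℓ and continuous functions f_ℓ : X_{ℓ+1} → X_ℓ, and let g_ℓ : X_{ℓ+1} → X_ℓ (for ℓ ≥ 0) be continuous functions such that for each non-negative integer ℓ and each x ∈ X_{ℓ+2}, g_ℓ(f_{ℓ+1}(x)) = f_ℓ(g_{ℓ+1}(x)). If g_0(x) ≠ f_0(x) for all x ∈ X_1, then the inverse limit varprojlim{X_ℓ, f_ℓ}_{ℓ≥1} does not have the fixed point property. -/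
open Metric Filter Set Function

/-!
The maps `g` commute with the bonding maps, so `x ↦ (g_{n+1}(x_{n+1}))_n` is a continuous
self-map of the inverse limit. At a fixed point `p` both `f_1` and `g_1` send `p_1` to `p_0`,
and the commutation relation at level `0` then gives `g_0(p_0) = f_0(p_0)`.
-/

section ShiftMap

variable {Y : ℕ → Type*}

def shiftMap (h : ∀ n, Y (n + 1) → Y n) (x : ∀ n, Y n) : ∀ n, Y n :=
  fun n => h n (x (n + 1))

theorem mapsTo_shiftMap_invLim {f h : ∀ n, Y (n + 1) → Y n}
    (hcomm : ∀ n (y : Y (n + 2)), h n (f (n + 1) y) = f n (h (n + 1) y)) :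
    MapsTo (shiftMap h) (invLim Y f) (invLim Y f) := by
  intro x hx n
  simp only [shiftMap]
  rw [hx (n + 1), hcomm]

theorem continuous_shiftMap [∀ n, TopologicalSpace (Y n)] {h : ∀ n, Y (n + 1) → Y n}
    (hh : ∀ n, Continuous (h n)) : Continuous (shiftMap h) :=
  continuous_pi fun n => (hh n).comp (continuous_apply (n + 1))

end ShiftMap

theorem stmt18_general
    {X : ℕ → Type*} [∀ n, MetricSpace (X n)]
    (f : ∀ n, X (n + 1) → X n)
    (g : ∀ n, X (n + 1) → X n) (hg : ∀ n, Continuous (g n))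
    (hcomm : ∀ n : ℕ, ∀ x : X (n + 2), g n (f (n + 1) x) = f n (g (n + 1) x))
    (hne : ∀ x : X 1, g 0 x ≠ f 0 x) :
    ¬ HasFPP ↥(invLim (fun n => X (n + 1)) (fun n => f (n + 1))) := by
  intro hfpp
  have hmaps := mapsTo_shiftMap_invLim (Y := fun n => X (n + 1)) (f := fun n => f (n + 1))
    (h := fun n => g (n + 1)) fun n => hcomm (n + 1)
  obtain ⟨p, hp⟩ := hfpp _ ((continuous_shiftMap fun n => hg (n + 1)).restrict hmaps)
  have hg1 : g 1 (p.1 1) = p.1 0 := congrFun (congrArg Subtype.val hp) 0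
  have hf1 : f 1 (p.1 1) = p.1 0 := (p.2 0).symm
  apply hne (p.1 0)
  rw [← hf1, hcomm 0, hg1, hf1]

theorem stmt18
    {X : ℕ → Type*} [∀ n, MetricSpace (X n)] [∀ n, CompactSpace (X n)]
    (f : ∀ n, X (n + 1) → X n) (hf : ∀ n, Continuous (f n))
    (g : ∀ n, X (n + 1) → X n) (hg : ∀ n, Continuous (g n))
    (hcomm : ∀ n : ℕ, ∀ x : X (n + 2), g n (f (n + 1) x) = f n (g (n + 1) x))
    (hne : ∀ x : X 1, g 0 x ≠ f 0 x) :
    ¬ HasFPP ↥(invLim (fun n => X (n + 1)) (fun n => f (n + 1))) :=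
  stmt18_general f g hg hcomm hne
end
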